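/- Let 1 ≤ d < n be integers, let P ∈ ℝ^{d×n} have invertible leading d×d block P_I, set Q := P_I^{-1} P_II, and let α ≥ β ≥ 0, μ ∈ [0,α], ν ∈ [0,β]. Then there exists a constant C > 0, independent of K, L and of the coefficient family, such that for all positive integers K, L and every family c : ℤ^n → ℂ, (Σ_{k ∈ ℤ^n ∖ 𝒦_{K,L}} (‖k_I + Q k_II‖^{2μ} + ‖k_II‖^{2ν}) |c_k|²)^{1/2} ≤ C [ K^{−α}(K^{μ}+L^{ν}) (Σ_{k∈ℤ^n} ‖P k‖^{2α}|c_k|²)^{1/2} + L^{−β}(K^{μ}+L^{ν}) (Σ_{k∈ℤ^n} ‖k‖^{2β}|c_k|²)^{1/2} ]. -/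

import Mathlib

open scoped ENNReal

/-- Euclidean norm of a vector in `ℝ^m`. -/
noncomputable def euclNorm {m : ℕ} (x : Fin m → ℝ) : ℝ :=
  ‖(EuclideanSpace.equiv (Fin m) ℝ).symm x‖

/-- Mixed weight `‖k_I + Q k_II‖^(2α) + ‖k_II‖^(2β)` (real powers, `0⁰ = 1`). -/
noncomputable def wMix (d m : ℕ) (Q : Matrix (Fin d) (Fin m) ℝ) (α β : ℝ)
    (k : Fin (d + m) → ℤ) : ℝ :=
  euclNorm ((fun i => (k (Fin.castAdd m i) : ℝ)) +
      Q.mulVec fun j => (k (Fin.natAdd d j) : ℝ)) ^ (2 * α) +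
    euclNorm (fun j => (k (Fin.natAdd d j) : ℝ)) ^ (2 * β)

/-- Weight `‖P k‖^(2α)`. -/
noncomputable def wP (d m : ℕ) (P : Matrix (Fin d) (Fin (d + m)) ℝ) (α : ℝ)
    (k : Fin (d + m) → ℤ) : ℝ :=
  euclNorm (P.mulVec fun i => (k i : ℝ)) ^ (2 * α)

/-- Weight `‖k‖^(2β)`. -/
noncomputable def wFull (d m : ℕ) (β : ℝ) (k : Fin (d + m) → ℤ) : ℝ :=
  euclNorm (fun i => (k i : ℝ)) ^ (2 * β)

/-- Membership in the parallelogram index set `𝒦_{K,L}`: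
each component of `k_I + Q k_II` lies in `[-K, K)` and each component of `k_II` in `[-L, L)`. -/
def memK (d m : ℕ) (Q : Matrix (Fin d) (Fin m) ℝ) (K L : ℕ) (k : Fin (d + m) → ℤ) : Prop :=
  (∀ i : Fin d,
      -(K : ℝ) ≤ (k (Fin.castAdd m i) : ℝ) + Q.mulVec (fun j => (k (Fin.natAdd d j) : ℝ)) i ∧
      (k (Fin.castAdd m i) : ℝ) + Q.mulVec (fun j => (k (Fin.natAdd d j) : ℝ)) i < (K : ℝ)) ∧
  (∀ j : Fin m, -(L : ℤ) ≤ k (Fin.natAdd d j) ∧ k (Fin.natAdd d j) < (L : ℤ))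

/-!
Put `y = k_I + Q k_II`. Since `P k = P_I y`, `‖y‖ ≤ c ‖P k‖` with `c` a bound for `P_I⁻¹`.
If `k ∉ 𝒦_{K,L}` then `‖y‖ ≥ K` or `‖k_II‖ ≥ L`, i.e. one of `a = ‖y‖ / K`, `b = ‖k_II‖ / L`
is at least `1`. Hence `a^{2μ}` and `b^{2ν}` are both at most `a^{2α} + b^{2β}`
(for the larger of `a, b` use `μ ≤ α` resp. `ν ≤ β`; the other one is `≤ 1`), and so
`‖y‖^{2μ} + ‖k_II‖^{2ν} ≤ (K^μ + L^ν)² (a^{2α} + b^{2β})`. With `C = c^α` this is the pointwise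
weight bound; summing over `k` and using `√(x + y) ≤ √x + √y` gives the theorem.
-/

open scoped Matrix

lemma euclNorm_nonneg {m : ℕ} (x : Fin m → ℝ) : 0 ≤ euclNorm x := norm_nonneg _

lemma abs_le_euclNorm {m : ℕ} (x : Fin m → ℝ) (i : Fin m) : |x i| ≤ euclNorm x :=
  PiLp.norm_apply_le ((EuclideanSpace.equiv (Fin m) ℝ).symm x) i

lemma euclNorm_natAdd_le {d m : ℕ} (x : Fin (d + m) → ℝ) :
    euclNorm (fun j => x (Fin.natAdd d j)) ≤ euclNorm x := by
  simp only [euclNorm, EuclideanSpace.norm_eq]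
  gcongr
  simp only [PiLp.continuousLinearEquiv_symm_apply, Real.norm_eq_abs, sq_abs]
  rw [Fin.sum_univ_add]
  exact le_add_of_nonneg_left (by positivity)

open scoped Matrix.Norms.L2Operator in
lemma exists_one_le_euclNorm_mulVec_le {a b : ℕ} (A : Matrix (Fin a) (Fin b) ℝ) :
    ∃ c, 1 ≤ c ∧ ∀ v, euclNorm (A *ᵥ v) ≤ c * euclNorm v := by
  refine ⟨max 1 ‖A‖, le_max_left _ _, fun v => ?_⟩
  calc euclNorm (A *ᵥ v) ≤ ‖A‖ * euclNorm v :=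
        A.l2_opNorm_mulVec ((EuclideanSpace.equiv (Fin b) ℝ).symm v)
    _ ≤ max 1 ‖A‖ * euclNorm v := by gcongr; exacts [norm_nonneg _, le_max_right _ _]

lemma head_add_mulVec_tail_eq {d m : ℕ} (P : Matrix (Fin d) (Fin (d + m)) ℝ)
    (hinv : IsUnit (P.submatrix id (Fin.castAdd m))) (x : Fin (d + m) → ℝ) :
    (fun i => x (Fin.castAdd m i)) +
        ((P.submatrix id (Fin.castAdd m))⁻¹ * P.submatrix id (Fin.natAdd d)) *ᵥ
          (fun j => x (Fin.natAdd d j)) =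
      (P.submatrix id (Fin.castAdd m))⁻¹ *ᵥ (P *ᵥ x) := by
  set PI := P.submatrix id (Fin.castAdd m)
  have hdet : IsUnit PI.det := (Matrix.isUnit_iff_isUnit_det PI).mp hinv
  have hsplit : P *ᵥ x = PI *ᵥ (fun i => x (Fin.castAdd m i)) +
      P.submatrix id (Fin.natAdd d) *ᵥ (fun j => x (Fin.natAdd d j)) := by
    ext i
    simp only [Matrix.mulVec, dotProduct, PI, Matrix.submatrix_apply, id_eq, Pi.add_apply,
      Fin.sum_univ_add]
  rw [hsplit, Matrix.mulVec_add, Matrix.mulVec_mulVec, Matrix.nonsing_inv_mul PI hdet,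
    Matrix.one_mulVec, Matrix.mulVec_mulVec]

lemma le_euclNorm_or_le_euclNorm_of_not_memK {d m : ℕ} {Q : Matrix (Fin d) (Fin m) ℝ}
    {K L : ℕ} {k : Fin (d + m) → ℤ} (hk : ¬ memK d m Q K L k) :
    (K : ℝ) ≤ euclNorm ((fun i => (k (Fin.castAdd m i) : ℝ)) +
        Q *ᵥ fun j => (k (Fin.natAdd d j) : ℝ)) ∨
      (L : ℝ) ≤ euclNorm (fun j => (k (Fin.natAdd d j) : ℝ)) := by
  rw [memK, not_and_or, not_forall, not_forall] at hk
  rcases hk with ⟨i, hi⟩ | ⟨j, hj⟩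
  · refine .inl (le_trans ?_ (abs_le_euclNorm _ i))
    simp only [Pi.add_apply, le_abs']
    by_contra! h
    exact hi ⟨by linarith, h.2⟩
  · refine .inr (le_trans ?_ (abs_le_euclNorm _ j))
    have : (L : ℤ) ≤ |k (Fin.natAdd d j)| := by
      rw [le_abs']
      by_contra! h
      exact hj ⟨by linarith, h.2⟩
    exact_mod_cast this

lemma rpow_le_rpow_add_rpow_of_one_le_or {a b p q r : ℝ} (ha : 0 ≤ a) (hb : 0 ≤ b)
    (hp : 0 ≤ p) (hpq : p ≤ q) (hr : 0 ≤ r) (hab : 1 ≤ a ∨ 1 ≤ b) :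
    a ^ p ≤ a ^ q + b ^ r := by
  rcases le_or_gt 1 a with h | h
  · exact le_add_of_le_of_nonneg (Real.rpow_le_rpow_of_exponent_le h hpq) (by positivity)
  · calc a ^ p ≤ 1 := Real.rpow_le_one ha h.le hp
      _ ≤ b ^ r := Real.one_le_rpow (hab.resolve_left h.not_ge) hr
      _ ≤ a ^ q + b ^ r := le_add_of_nonneg_left (by positivity)

lemma rpow_two_mul {x : ℝ} (hx : 0 ≤ x) (t : ℝ) : x ^ (2 * t) = (x ^ t) ^ 2 := by
  rw [mul_comm, ← Real.rpow_mul_natCast hx]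
  norm_num

lemma rpow_add_rpow_le_sq_mul {K L Y Z α β μ ν : ℝ} (hK : 0 < K) (hL : 0 < L)
    (hY : 0 ≤ Y) (hZ : 0 ≤ Z) (hμ0 : 0 ≤ μ) (hμ : μ ≤ α) (hν0 : 0 ≤ ν) (hν : ν ≤ β)
    (hout : K ≤ Y ∨ L ≤ Z) :
    Y ^ (2 * μ) + Z ^ (2 * ν) ≤
      (K ^ μ + L ^ ν) ^ 2 * ((Y / K) ^ (2 * α) + (Z / L) ^ (2 * β)) := by
  have hab : 1 ≤ Y / K ∨ 1 ≤ Z / L := by rwa [one_le_div hK, one_le_div hL]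
  have hYK : Y ^ (2 * μ) = (K ^ μ) ^ 2 * (Y / K) ^ (2 * μ) := by
    rw [← rpow_two_mul hK.le, ← Real.mul_rpow hK.le (by positivity), mul_div_cancel₀ _ hK.ne']
  have hZL : Z ^ (2 * ν) = (L ^ ν) ^ 2 * (Z / L) ^ (2 * ν) := by
    rw [← rpow_two_mul hL.le, ← Real.mul_rpow hL.le (by positivity), mul_div_cancel₀ _ hL.ne']
  have h1 : (Y / K) ^ (2 * μ) ≤ (Y / K) ^ (2 * α) + (Z / L) ^ (2 * β) :=
    rpow_le_rpow_add_rpow_of_one_le_or (by positivity) (by positivity) (by linarith)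
      (by linarith) (by linarith) hab
  have h2 : (Z / L) ^ (2 * ν) ≤ (Z / L) ^ (2 * β) + (Y / K) ^ (2 * α) :=
    rpow_le_rpow_add_rpow_of_one_le_or (by positivity) (by positivity) (by linarith)
      (by linarith) (by linarith) hab.symm
  have hKL : 0 ≤ K ^ μ * L ^ ν := by positivity
  have hM : 0 ≤ (Y / K) ^ (2 * α) + (Z / L) ^ (2 * β) := by positivity
  calc Y ^ (2 * μ) + Z ^ (2 * ν)
      ≤ (K ^ μ) ^ 2 * ((Y / K) ^ (2 * α) + (Z / L) ^ (2 * β)) +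
          (L ^ ν) ^ 2 * ((Y / K) ^ (2 * α) + (Z / L) ^ (2 * β)) := by
        rw [hYK, hZL]; gcongr; linarith
    _ ≤ (K ^ μ + L ^ ν) ^ 2 * ((Y / K) ^ (2 * α) + (Z / L) ^ (2 * β)) := by
        nlinarith [mul_nonneg hKL hM]

lemma div_rpow_le_rpow_neg_mul {x y K t : ℝ} (hK : 0 < K) (hx : 0 ≤ x) (ht : 0 ≤ t)
    (hxy : x ≤ y) :
    (x / K) ^ t ≤ K ^ (-t) * y ^ t := by
  rw [Real.div_rpow hx hK.le, Real.rpow_neg hK.le, inv_mul_eq_div]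
  gcongr

lemma rpow_add_rpow_le_of_le_or_le {K L Y Z W F c α β μ ν : ℝ} (hK : 0 < K) (hL : 0 < L)
    (hY : 0 ≤ Y) (hZ : 0 ≤ Z) (hc : 1 ≤ c) (hμ0 : 0 ≤ μ) (hμ : μ ≤ α) (hν0 : 0 ≤ ν)
    (hν : ν ≤ β) (hYW : Y ≤ c * W) (hZF : Z ≤ F) (hout : K ≤ Y ∨ L ≤ Z) :
    Y ^ (2 * μ) + Z ^ (2 * ν) ≤
      (c ^ α * K ^ (-α) * (K ^ μ + L ^ ν)) ^ 2 * W ^ (2 * α) +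
        (c ^ α * L ^ (-β) * (K ^ μ + L ^ ν)) ^ 2 * F ^ (2 * β) := by
  have hW : 0 ≤ W := nonneg_of_mul_nonneg_right (hY.trans hYW) (by linarith)
  have hF : 0 ≤ F := hZ.trans hZF
  have hYK : (Y / K) ^ α ≤ c ^ α * K ^ (-α) * W ^ α := by
    calc (Y / K) ^ α ≤ K ^ (-α) * (c * W) ^ α :=
          div_rpow_le_rpow_neg_mul hK hY (by linarith) hYW
      _ = c ^ α * K ^ (-α) * W ^ α := by rw [Real.mul_rpow (by linarith) hW]; ring
  have hZL : (Z / L) ^ β ≤ c ^ α * L ^ (-β) * F ^ β := by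
    calc (Z / L) ^ β ≤ L ^ (-β) * F ^ β := div_rpow_le_rpow_neg_mul hL hZ (by linarith) hZF
      _ ≤ c ^ α * (L ^ (-β) * F ^ β) :=
        le_mul_of_one_le_left (by positivity) (Real.one_le_rpow hc (by linarith))
      _ = c ^ α * L ^ (-β) * F ^ β := by ring
  calc Y ^ (2 * μ) + Z ^ (2 * ν)
      ≤ (K ^ μ + L ^ ν) ^ 2 * ((Y / K) ^ (2 * α) + (Z / L) ^ (2 * β)) :=
        rpow_add_rpow_le_sq_mul hK hL hY hZ hμ0 hμ hν0 hν hout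
    _ ≤ (K ^ μ + L ^ ν) ^ 2 * ((c ^ α * K ^ (-α) * W ^ α) ^ 2 +
          (c ^ α * L ^ (-β) * F ^ β) ^ 2) := by
        rw [rpow_two_mul (by positivity), rpow_two_mul (by positivity)]
        gcongr
    _ = _ := by rw [rpow_two_mul hW, rpow_two_mul hF]; ring

lemma wMix_le_of_not_memK {d m : ℕ} {P : Matrix (Fin d) (Fin (d + m)) ℝ}
    {Q : Matrix (Fin d) (Fin m) ℝ} {c α β μ ν : ℝ} (hc : 1 ≤ c)
    (hQP : ∀ x : Fin (d + m) → ℝ, euclNorm ((fun i => x (Fin.castAdd m i)) +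
      Q *ᵥ fun j => x (Fin.natAdd d j)) ≤ c * euclNorm (P *ᵥ x))
    (hμ0 : 0 ≤ μ) (hμ : μ ≤ α) (hν0 : 0 ≤ ν) (hν : ν ≤ β) {K L : ℕ} (hK : 0 < K) (hL : 0 < L)
    {k : Fin (d + m) → ℤ} (hk : ¬ memK d m Q K L k) :
    wMix d m Q μ ν k ≤
      (c ^ α * (K : ℝ) ^ (-α) * ((K : ℝ) ^ μ + (L : ℝ) ^ ν)) ^ 2 * wP d m P α k +
        (c ^ α * (L : ℝ) ^ (-β) * ((K : ℝ) ^ μ + (L : ℝ) ^ ν)) ^ 2 * wFull d m β k := by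
  have hYW := hQP fun i => (k i : ℝ)
  have hZF := euclNorm_natAdd_le fun i => (k i : ℝ)
  refine rpow_add_rpow_le_of_le_or_le (by positivity) (by positivity) ?_ ?_ hc hμ0 hμ hν0 hν
    hYW hZF (le_euclNorm_or_le_euclNorm_of_not_memK hk) <;> exact euclNorm_nonneg _

lemma ENNReal.rpow_half_tsum_subtype_le {ι : Type*} (p : ι → Prop) {f g h : ι → ℝ≥0∞}
    {A B : ℝ≥0∞} (hf : ∀ k, p k → f k ≤ A ^ 2 * g k + B ^ 2 * h k) :
    (∑' k : {k // p k}, f k) ^ ((1 : ℝ) / 2) ≤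
      A * (∑' k, g k) ^ ((1 : ℝ) / 2) + B * (∑' k, h k) ^ ((1 : ℝ) / 2) := by
  have hsum : ∑' k : {k // p k}, f k ≤ A ^ 2 * ∑' k, g k + B ^ 2 * ∑' k, h k :=
    calc ∑' k : {k // p k}, f k
        ≤ ∑' k : {k // p k}, (A ^ 2 * g k + B ^ 2 * h k) :=
          ENNReal.tsum_le_tsum fun k => hf k k.2
      _ = A ^ 2 * ∑' k : {k // p k}, g k + B ^ 2 * ∑' k : {k // p k}, h k := by
          rw [ENNReal.tsum_add, ENNReal.tsum_mul_left, ENNReal.tsum_mul_left]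
      _ ≤ A ^ 2 * ∑' k, g k + B ^ 2 * ∑' k, h k := by
          gcongr <;> exact ENNReal.tsum_comp_le_tsum_of_injective Subtype.val_injective _
  have hsqrt (x : ℝ≥0∞) : (x ^ 2) ^ ((1 : ℝ) / 2) = x := by
    rw [← ENNReal.rpow_natCast, ← ENNReal.rpow_mul]
    norm_num
  calc (∑' k : {k // p k}, f k) ^ ((1 : ℝ) / 2)
      ≤ (A ^ 2 * ∑' k, g k + B ^ 2 * ∑' k, h k) ^ ((1 : ℝ) / 2) := by gcongr
    _ ≤ (A ^ 2 * ∑' k, g k) ^ ((1 : ℝ) / 2) + (B ^ 2 * ∑' k, h k) ^ ((1 : ℝ) / 2) :=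
        ENNReal.rpow_add_le_add_rpow _ _ (by norm_num) (by norm_num)
    _ = A * (∑' k, g k) ^ ((1 : ℝ) / 2) + B * (∑' k, h k) ^ ((1 : ℝ) / 2) := by
        rw [ENNReal.mul_rpow_of_nonneg _ _ (by norm_num), ENNReal.mul_rpow_of_nonneg _ _
          (by norm_num), hsqrt, hsqrt]

lemma rpow_half_tsum_subtype_ofReal_mul_le {ι : Type*} (p : ι → Prop) {w u v x : ι → ℝ}
    {a b : ℝ} (ha : 0 ≤ a) (hb : 0 ≤ b) (hu : ∀ k, 0 ≤ u k) (hv : ∀ k, 0 ≤ v k)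
    (hx : ∀ k, 0 ≤ x k) (hw : ∀ k, p k → w k ≤ a ^ 2 * u k + b ^ 2 * v k) :
    (∑' k : {k // p k}, ENNReal.ofReal (w k * x k)) ^ ((1 : ℝ) / 2) ≤
      ENNReal.ofReal a * (∑' k, ENNReal.ofReal (u k * x k)) ^ ((1 : ℝ) / 2) +
        ENNReal.ofReal b * (∑' k, ENNReal.ofReal (v k * x k)) ^ ((1 : ℝ) / 2) := by
  refine ENNReal.rpow_half_tsum_subtype_le p (f := fun k => ENNReal.ofReal (w k * x k))
    (g := fun k => ENNReal.ofReal (u k * x k)) (h := fun k => ENNReal.ofReal (v k * x k))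
    fun k hk => ?_
  have hux : 0 ≤ u k * x k := mul_nonneg (hu k) (hx k)
  have hvx : 0 ≤ v k * x k := mul_nonneg (hv k) (hx k)
  calc ENNReal.ofReal (w k * x k)
      ≤ ENNReal.ofReal (a ^ 2 * (u k * x k) + b ^ 2 * (v k * x k)) := by
        gcongr
        nlinarith [hw k hk, hx k]
    _ = ENNReal.ofReal a ^ 2 * ENNReal.ofReal (u k * x k) +
          ENNReal.ofReal b ^ 2 * ENNReal.ofReal (v k * x k) := by
        rw [ENNReal.ofReal_add (by positivity) (by positivity), ENNReal.ofReal_mul (sq_nonneg a),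
          ENNReal.ofReal_mul (sq_nonneg b), ENNReal.ofReal_pow ha, ENNReal.ofReal_pow hb]

theorem stmt5_general (d m : ℕ)
    (P : Matrix (Fin d) (Fin (d + m)) ℝ)
    (PI : Matrix (Fin d) (Fin d) ℝ) (hPI : PI = P.submatrix id (Fin.castAdd m))
    (PII : Matrix (Fin d) (Fin m) ℝ) (hPII : PII = P.submatrix id (Fin.natAdd d))
    (hinv : IsUnit PI)
    (Q : Matrix (Fin d) (Fin m) ℝ) (hQ : Q = PI⁻¹ * PII)
    (α β μ ν : ℝ) (hμ0 : 0 ≤ μ) (hμ : μ ≤ α)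
    (hν0 : 0 ≤ ν) (hν : ν ≤ β) :
    ∃ C : ℝ, 0 < C ∧ ∀ K L : ℕ, 0 < K → 0 < L → ∀ c : (Fin (d + m) → ℤ) → ℂ,
      (∑' k : {k : Fin (d + m) → ℤ // ¬ memK d m Q K L k},
          ENNReal.ofReal (wMix d m Q μ ν k.1 * ‖c k.1‖ ^ 2)) ^ ((1 : ℝ) / 2) ≤
        ENNReal.ofReal (C * (K : ℝ) ^ (-α) * ((K : ℝ) ^ μ + (L : ℝ) ^ ν)) *
            (∑' k : Fin (d + m) → ℤ,
              ENNReal.ofReal (wP d m P α k * ‖c k‖ ^ 2)) ^ ((1 : ℝ) / 2) +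
          ENNReal.ofReal (C * (L : ℝ) ^ (-β) * ((K : ℝ) ^ μ + (L : ℝ) ^ ν)) *
            (∑' k : Fin (d + m) → ℤ,
              ENNReal.ofReal (wFull d m β k * ‖c k‖ ^ 2)) ^ ((1 : ℝ) / 2) := by
  subst hPI hPII hQ
  obtain ⟨C, hC, hCP⟩ := exists_one_le_euclNorm_mulVec_le (P.submatrix id (Fin.castAdd m))⁻¹
  have hQP (x : Fin (d + m) → ℝ) := (head_add_mulVec_tail_eq P hinv x).symm ▸ hCP (P *ᵥ x)
  have hC0 : 0 < C := by linarith
  refine ⟨C ^ α, by positivity, fun K L hK hL c => ?_⟩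
  exact rpow_half_tsum_subtype_ofReal_mul_le _ (w := wMix d m _ μ ν) (x := fun k => ‖c k‖ ^ 2)
    (by positivity) (by positivity) (fun _ => Real.rpow_nonneg (euclNorm_nonneg _) _)
    (fun _ => Real.rpow_nonneg (euclNorm_nonneg _) _) (fun _ => by positivity)
    (fun k hk => wMix_le_of_not_memK hC hQP hμ0 hμ hν0 hν hK hL hk)

/-- truncation error bound
`|u - P_{K,L}u|_{μ,ν} ≤ C (K^{-α}(K^μ+L^ν) |u|_α + L^{-β}(K^μ+L^ν) |U|_{H^β})`. -/
theorem stmt5 (d m : ℕ) (hd : 1 ≤ d) (hm : 1 ≤ m)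
    (P : Matrix (Fin d) (Fin (d + m)) ℝ)
    (PI : Matrix (Fin d) (Fin d) ℝ) (hPI : PI = P.submatrix id (Fin.castAdd m))
    (PII : Matrix (Fin d) (Fin m) ℝ) (hPII : PII = P.submatrix id (Fin.natAdd d))
    (hinv : IsUnit PI)
    (Q : Matrix (Fin d) (Fin m) ℝ) (hQ : Q = PI⁻¹ * PII)
    (α β μ ν : ℝ) (hβ : 0 ≤ β) (hαβ : β ≤ α) (hμ0 : 0 ≤ μ) (hμ : μ ≤ α)
    (hν0 : 0 ≤ ν) (hν : ν ≤ β) :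
    ∃ C : ℝ, 0 < C ∧ ∀ K L : ℕ, 0 < K → 0 < L → ∀ c : (Fin (d + m) → ℤ) → ℂ,
      (∑' k : {k : Fin (d + m) → ℤ // ¬ memK d m Q K L k},
          ENNReal.ofReal (wMix d m Q μ ν k.1 * ‖c k.1‖ ^ 2)) ^ ((1 : ℝ) / 2) ≤
        ENNReal.ofReal (C * (K : ℝ) ^ (-α) * ((K : ℝ) ^ μ + (L : ℝ) ^ ν)) *
            (∑' k : Fin (d + m) → ℤ,
              ENNReal.ofReal (wP d m P α k * ‖c k‖ ^ 2)) ^ ((1 : ℝ) / 2) +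
          ENNReal.ofReal (C * (L : ℝ) ^ (-β) * ((K : ℝ) ^ μ + (L : ℝ) ^ ν)) *
            (∑' k : Fin (d + m) → ℤ,
              ENNReal.ofReal (wFull d m β k * ‖c k‖ ^ 2)) ^ ((1 : ℝ) / 2) :=
  stmt5_general d m P PI hPI PII hPII hinv Q hQ α β μ ν hμ0 hμ hν0 hν
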